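/- Let I be a BinCSP instance with Gaifman graph G whose domains D(u), u ∈ V(G), are pairwise disjoint. Construct a List Coloring instance (G′, L) as follows: V(G′) = V(G) ∪ {a_{uv,(c,c′)} : uv ∈ E(G), (c, c′) ∈ (D(u) × D(v)) ∖ C(u,v)}; the edges of G′ join each a_{uv,(c,c′)} exactly to u and to v (there are no edges between vertices of V(G)); and the lists are L(u) = D(u) for u ∈ V(G) and L(a_{uv,(c,c′)}) = {c, c′}. Then (G′, L) is a yes-instance of List Coloring if and only if I is satisfiable. Moreover, td(G′) ≤ td(G) + 1, and for every W ⊆ V(G), td(G′ − W) ≤ td(G − W) + 1. -/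

import Mathlib

/-- A rooted forest on a vertex type `V`, given by a parent function.
Well-foundedness guarantees that following parents from any vertex
eventually reaches a root (a vertex with no parent). -/
structure RootedForest (V : Type) where
  parent : V → Option V
  wf : WellFounded (fun a b => parent b = some a)

namespace RootedForest

/-- The depth of a vertex: the number of vertices on the path from its root to it. -/
noncomputable def depth {V : Type} (F : RootedForest V) : V → ℕ :=
  F.wf.fix (fun v ih =>
    match h : F.parent v with
    | none => 1
    | some p => ih p h + 1)

/-- `F.anc u v` means that `u` is an ancestor of `v` in `F` (possibly `u = v`). -/
def anc {V : Type} (F : RootedForest V) (u v : V) : Prop :=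
  Relation.ReflTransGen (fun a b => F.parent a = some b) v u

end RootedForest

/-- The depth of a rooted forest: the maximum number of vertices on a root-to-leaf path. -/
noncomputable def forestDepth {V : Type} (F : RootedForest V) : ℕ := ⨆ v, F.depth v

/-- `F` is an elimination forest of `G`: for every edge of `G`, one endpoint is an
ancestor of the other. -/
def IsElimForest {V : Type} (G : SimpleGraph V) (F : RootedForest V) : Prop :=
  ∀ u v, G.Adj u v → F.anc u v ∨ F.anc v u

/-- The treedepth of a graph: the minimum depth of an elimination forest. -/
noncomputable def treedepth {V : Type} (G : SimpleGraph V) : ℕ :=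
  sInf {d : ℕ | ∃ F : RootedForest V, IsElimForest G F ∧ forestDepth F ≤ d}

-- depth unfolding
lemma depth_none {V : Type} (F : RootedForest V) {v : V} (h : F.parent v = none) :
    F.depth v = 1 := by
  rw [RootedForest.depth, WellFounded.fix_eq]
  split <;> simp_all

lemma depth_some {V : Type} (F : RootedForest V) {v p : V} (h : F.parent v = some p) :
    F.depth v = F.depth p + 1 := by
  rw [RootedForest.depth, WellFounded.fix_eq]
  split <;> simp_all
  rename_i p' h'
  subst h
  rfl

section Extend
variable {X Y : Type} (F : RootedForest X) (ι : X → Y) (par : Y → Option X)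
  (hpar : ∀ x, par (ι x) = F.parent x)

def extendForest : RootedForest Y where
  parent y := (par y).map ι
  wf := by
    have hacc : ∀ x, Acc (fun a b => (par b).map ι = some a) (ι x) := by
      intro x
      induction x using F.wf.induction with
      | _ x ih =>
        constructor
        intro y hy
        rw [hpar] at hy
        cases hp : F.parent x with
        | none => rw [hp] at hy; simp at hy
        | some p =>
          rw [hp] at hy
          simp only [Option.map_some] at hy
          cases hy
          exact ih p hp
    constructor
    intro y
    constructor
    intro z hz
    cases hp : par y with
    | none => rw [hp] at hz; simp at hz
    | some x =>
      rw [hp] at hz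
      simp only [Option.map_some] at hz
      cases hz
      exact hacc x

lemma extendForest_depth_core (hι : Function.Injective ι) (x : X) :
    (extendForest F ι par hpar).depth (ι x) = F.depth x := by
  induction x using F.wf.induction with
  | _ x ih =>
    cases hp : F.parent x with
    | none =>
      rw [depth_none F hp, depth_none]
      show (par (ι x)).map ι = none
      rw [hpar, hp]; rfl
    | some p =>
      rw [depth_some F hp, depth_some (extendForest F ι par hpar) (p := ι p), ih p hp]
      show (par (ι x)).map ι = some (ι p)
      rw [hpar, hp]; rfl

lemma extendForest_anc_core (hu : F.anc u v) :
    (extendForest F ι par hpar).anc (ι u) (ι v) := by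
  exact Relation.ReflTransGen.lift (p := fun a b => (extendForest F ι par hpar).parent a = some b) ι (fun a b h => by
    show (par (ι a)).map ι = some (ι b)
    rw [hpar, h]; rfl) _ _ hu

lemma extendForest_anc_gadget {y : Y} {x u : X} (hy : par y = some x) (hu : F.anc u x) :
    (extendForest F ι par hpar).anc (ι u) y := by
  refine Relation.ReflTransGen.head ?_ (extendForest_anc_core F ι par hpar hu)
  show (par y).map ι = some (ι x)
  rw [hy]; rfl

lemma extendForest_forestDepth [Finite X] (hι : Function.Injective ι) :
    forestDepth (extendForest F ι par hpar) ≤ forestDepth F + 1 := by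
  apply ciSup_le'
  intro y
  cases hp : par y with
  | none =>
    rw [depth_none (extendForest F ι par hpar) (show (par y).map ι = none by rw [hp]; rfl)]
    omega
  | some x =>
    rw [depth_some (extendForest F ι par hpar)
        (show (par y).map ι = some (ι x) by rw [hp]; rfl)]
    rw [extendForest_depth_core F ι par hpar hι]
    have : F.depth x ≤ forestDepth F :=
      le_ciSup (Set.Finite.bddAbove (Set.finite_range _)) x
    omega

end Extend

lemma exists_elimForest {X : Type} [Finite X] (G : SimpleGraph X) :
    ∃ F : RootedForest X, IsElimForest G F := by
  obtain ⟨n, ⟨e⟩⟩ := Finite.exists_equiv_fin X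
  classical
  let par : X → Option X := fun x =>
    if h : (e x : ℕ) = 0 then none
    else some (e.symm ⟨(e x : ℕ) - 1, by omega⟩)
  have hstep : ∀ a b : X, par b = some a → (e a : ℕ) < (e b : ℕ) := by
    intro a b hab
    simp only [par] at hab
    split at hab
    · simp at hab
    · rename_i h
      cases hab
      simp only [Equiv.apply_symm_apply]
      omega
  have hwf : WellFounded (fun a b : X => par b = some a) :=
    Subrelation.wf (fun {a b} hab => hstep a b hab)
      (InvImage.wf (fun x => (e x : ℕ)) Nat.lt_wfRel.wf)
  let F : RootedForest X := ⟨par, hwf⟩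
  have key : ∀ m : ℕ, ∀ v u : X, (e v : ℕ) = m → (e u : ℕ) ≤ m → F.anc u v := by
    intro m
    induction m with
    | zero =>
      intro v u hv hu
      have huv : u = v := e.injective (Fin.ext (by omega))
      rw [huv]
      exact Relation.ReflTransGen.refl
    | succ m ih =>
      intro v u hv hu
      by_cases h : (e u : ℕ) = m + 1
      · have huv : u = v := e.injective (Fin.ext (by omega))
        rw [huv]
        exact Relation.ReflTransGen.refl
      · have hstep' : par v = some (e.symm ⟨m, by omega⟩) := by
          simp only [par]
          rw [dif_neg (by omega)]
          have hm : (⟨(e v : ℕ) - 1, by omega⟩ : Fin n) = ⟨m, by omega⟩ :=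
            Fin.ext (by simp; omega)
          rw [hm]
        exact Relation.ReflTransGen.head hstep'
          (ih (e.symm ⟨m, by omega⟩) u (by simp) (by omega))
  refine ⟨F, fun u v _ => ?_⟩
  rcases le_total (e u : ℕ) (e v : ℕ) with h | h
  · exact Or.inl (key (e v) v u rfl h)
  · exact Or.inr (key (e u) u v rfl h)

lemma treedepth_spec {X : Type} [Finite X] (G : SimpleGraph X) :
    ∃ F : RootedForest X, IsElimForest G F ∧ forestDepth F ≤ treedepth G := by
  obtain ⟨F, hF⟩ := exists_elimForest G
  have hne : {d : ℕ | ∃ F : RootedForest X, IsElimForest G F ∧ forestDepth F ≤ d}.Nonempty :=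
    ⟨forestDepth F, F, hF, le_refl _⟩
  exact Nat.sInf_mem hne

/-- correctness of the reduction from BinCSP (with pairwise disjoint
domains) to List Coloring. The new graph `G'` consists of `V(G)` (as an independent set)
together with a gadget vertex for every edge `uv` of `G` and every forbidden pair
`(c, c') ∈ (D u × D v) ∖ C u v`, adjacent exactly to `u` and `v` and carrying the list
`{c, c'}`. Then `G'` with these lists is list-colorable iff the instance is satisfiable;
moreover `td(G') ≤ td(G) + 1`, and `td(G' − W) ≤ td(G − W) + 1` for every `W ⊆ V(G)`. -/
theorem stmt11 {V A : Type} [Finite V] (G : SimpleGraph V)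
    (D : V → Set A) (C : V → V → Set (A × A))
    (hsym : ∀ u v : V, ∀ a b : A, (a, b) ∈ C u v ↔ (b, a) ∈ C v u)
    (hdom : ∀ u v : V, ∀ a b : A, (a, b) ∈ C u v → a ∈ D u ∧ b ∈ D v)
    (hdisj : ∀ u v : V, u ≠ v → Disjoint (D u) (D v))
    -- the gadget vertices: `att a` gives the endpoints of the edge of `a`, and
    -- `pr a` its forbidden pair of values
    (N : Type) [Finite N] (att : N → V × V) (pr : N → A × A)
    (hgadget : ∀ a : N, G.Adj (att a).1 (att a).2 ∧ (pr a).1 ∈ D (att a).1 ∧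
      (pr a).2 ∈ D (att a).2 ∧ pr a ∉ C (att a).1 (att a).2)
    (hcomplete : ∀ u v : V, ∀ c c' : A, G.Adj u v → c ∈ D u → c' ∈ D v →
      (c, c') ∉ C u v →
      ∃ a : N, (att a = (u, v) ∧ pr a = (c, c')) ∨ (att a = (v, u) ∧ pr a = (c', c)))
    -- the graph `G'`: each gadget vertex is adjacent exactly to the two endpoints of its
    -- edge; there are no edges between vertices of `V(G)`
    (G' : SimpleGraph (V ⊕ N))
    (hG' : ∀ x y : V ⊕ N, G'.Adj x y ↔
      ∃ (u : V) (a : N), ((att a).1 = u ∨ (att a).2 = u) ∧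
        ((x = Sum.inl u ∧ y = Sum.inr a) ∨ (x = Sum.inr a ∧ y = Sum.inl u)))
    -- the lists
    (L : V ⊕ N → Set A)
    (hLV : ∀ u : V, L (Sum.inl u) = D u)
    (hLN : ∀ a : N, L (Sum.inr a) = {(pr a).1, (pr a).2}) :
    ((∃ f : V ⊕ N → A, (∀ x, f x ∈ L x) ∧ ∀ x y, G'.Adj x y → f x ≠ f y) ↔
      (∃ η : V → A, (∀ v, η v ∈ D v) ∧ ∀ u v, G.Adj u v → (η u, η v) ∈ C u v)) ∧
    treedepth G' ≤ treedepth G + 1 ∧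
    ∀ W : Set V,
      treedepth (G'.induce (Sum.inl '' W)ᶜ) ≤ treedepth (G.induce Wᶜ) + 1 := by
  classical
  refine ⟨?_, ?_, ?_⟩
  · constructor
    · rintro ⟨f, hfL, hfadj⟩
      refine ⟨fun v => f (Sum.inl v), fun v => by rw [← hLV v]; exact hfL _, ?_⟩
      intro u v huv
      by_contra hC
      have hDu : f (Sum.inl u) ∈ D u := by rw [← hLV]; exact hfL _
      have hDv : f (Sum.inl v) ∈ D v := by rw [← hLV]; exact hfL _
      obtain ⟨a, ha⟩ := hcomplete u v _ _ huv hDu hDv hC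
      have hadj : ∀ w : V, (att a).1 = w ∨ (att a).2 = w →
          G'.Adj (Sum.inl w) (Sum.inr a) := by
        intro w hw; rw [hG']; exact ⟨w, a, hw, Or.inl ⟨rfl, rfl⟩⟩
      have hfa := hfL (Sum.inr a)
      rw [hLN] at hfa
      rcases ha with ⟨h1, h2⟩ | ⟨h1, h2⟩
      · have hu := hfadj _ _ (hadj u (Or.inl (by rw [h1])))
        have hv := hfadj _ _ (hadj v (Or.inr (by rw [h1])))
        rw [h2] at hfa
        rcases hfa with h | h
        · exact hu h.symm
        · exact hv h.symm
      · have hu := hfadj _ _ (hadj u (Or.inr (by rw [h1])))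
        have hv := hfadj _ _ (hadj v (Or.inl (by rw [h1])))
        rw [h2] at hfa
        rcases hfa with h | h
        · exact hv h.symm
        · exact hu h.symm
    · rintro ⟨η, hηD, hηC⟩
      have hga : ∀ a : N, ∃ c : A, c ∈ ({(pr a).1, (pr a).2} : Set A) ∧
          c ≠ η ((att a).1) ∧ c ≠ η ((att a).2) := by
        intro a
        obtain ⟨hadj, hc1, hc2, hnC⟩ := hgadget a
        have hne : (att a).1 ≠ (att a).2 := hadj.ne
        have hCη := hηC _ _ hadj
        by_cases h : (pr a).1 = η ((att a).1)
        · refine ⟨(pr a).2, by simp, ?_, ?_⟩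
          · intro he
            exact (hdisj _ _ hne.symm).ne_of_mem hc2 (hηD ((att a).1)) he
          · intro he
            exact hnC (by rw [show pr a = ((pr a).1, (pr a).2) from rfl, h, he]; exact hCη)
        · refine ⟨(pr a).1, by simp, h, ?_⟩
          intro he
          exact (hdisj _ _ hne).ne_of_mem hc1 (hηD ((att a).2)) he
      choose g hg1 hg2 hg3 using hga
      refine ⟨Sum.elim η g, ?_, ?_⟩
      · rintro (v | a)
        · rw [hLV]; exact hηD v
        · rw [hLN]; exact hg1 a
      · intro x y hxy
        rw [hG'] at hxy
        obtain ⟨u, a, hu, hc⟩ := hxy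
        have hne : η u ≠ g a := by
          rcases hu with h | h
          · exact fun he => hg2 a (h ▸ he.symm)
          · exact fun he => hg3 a (h ▸ he.symm)
        rcases hc with ⟨hx, hy⟩ | ⟨hx, hy⟩
        · subst hx; subst hy; exact hne
        · subst hx; subst hy; exact hne.symm
  · obtain ⟨F, hFelim, hFd⟩ := treedepth_spec G
    let par : V ⊕ N → Option V := fun y => match y with
      | Sum.inl v => F.parent v
      | Sum.inr a => some (if F.anc (att a).1 (att a).2 then (att a).2 else (att a).1)
    have hpar : ∀ v : V, par (Sum.inl v) = F.parent v := fun _ => rfl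
    apply Nat.sInf_le
    refine ⟨extendForest F Sum.inl par hpar, ?_, ?_⟩
    · intro x y hxy
      rw [hG'] at hxy
      obtain ⟨u, a, hu, hc⟩ := hxy
      have key : (extendForest F Sum.inl par hpar).anc (Sum.inl u) (Sum.inr a) := by
        have helim := hFelim _ _ (hgadget a).1
        by_cases h : F.anc (att a).1 (att a).2
        · have hp : par (Sum.inr a) = some ((att a).2) := by
            show some (if F.anc (att a).1 (att a).2 then (att a).2 else (att a).1) = _
            rw [if_pos h]
          rcases hu with h1 | h1
          · exact extendForest_anc_gadget F Sum.inl par hpar hp (h1 ▸ h)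
          · exact extendForest_anc_gadget F Sum.inl par hpar hp (h1 ▸ Relation.ReflTransGen.refl)
        · have h2 : F.anc (att a).2 (att a).1 := helim.resolve_left h
          have hp : par (Sum.inr a) = some ((att a).1) := by
            show some (if F.anc (att a).1 (att a).2 then (att a).2 else (att a).1) = _
            rw [if_neg h]
          rcases hu with h1 | h1
          · exact extendForest_anc_gadget F Sum.inl par hpar hp (h1 ▸ Relation.ReflTransGen.refl)
          · exact extendForest_anc_gadget F Sum.inl par hpar hp (h1 ▸ h2)
      rcases hc with ⟨hx, hy⟩ | ⟨hx, hy⟩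
      · subst hx; subst hy; exact Or.inl key
      · subst hx; subst hy; exact Or.inr key
    · have := extendForest_forestDepth F Sum.inl par hpar Sum.inl_injective
      omega
  · intro W
    obtain ⟨F, hFelim, hFd⟩ := treedepth_spec (G.induce Wᶜ)
    let S : Set (V ⊕ N) := (Sum.inl '' W)ᶜ
    have hmemV : ∀ v : V, Sum.inl v ∈ S ↔ v ∈ Wᶜ := by
      intro v
      simp [S, Set.mem_image]
    have hmemN : ∀ a : N, Sum.inr a ∈ S := by
      intro a
      simp [S, Set.mem_image]
    let ι : ↥Wᶜ → ↥S := fun x => ⟨Sum.inl x.1, (hmemV x.1).mpr x.2⟩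
    have hιinj : Function.Injective ι := by
      intro a b hab
      have := congrArg Subtype.val hab
      exact Subtype.ext (Sum.inl_injective this)
    let par : ↥S → Option ↥Wᶜ := fun y => match y with
      | ⟨Sum.inl v, h⟩ => F.parent ⟨v, (hmemV v).mp h⟩
      | ⟨Sum.inr a, _⟩ =>
        if h1 : (att a).1 ∈ Wᶜ then
          if h2 : (att a).2 ∈ Wᶜ then
            some (if F.anc ⟨(att a).1, h1⟩ ⟨(att a).2, h2⟩ then ⟨(att a).2, h2⟩
              else ⟨(att a).1, h1⟩)
          else some ⟨(att a).1, h1⟩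
        else if h2 : (att a).2 ∈ Wᶜ then some ⟨(att a).2, h2⟩ else none
    have hpar : ∀ x : ↥Wᶜ, par (ι x) = F.parent x := by
      rintro ⟨v, hv⟩
      rfl
    apply Nat.sInf_le
    refine ⟨extendForest F ι par hpar, ?_, ?_⟩
    · rintro ⟨xv, hx⟩ ⟨yv, hy⟩ hxy
      have hxy' : G'.Adj xv yv := hxy
      rw [hG'] at hxy'
      obtain ⟨u, a, hu, hc⟩ := hxy'
      have key : ∀ hus : Sum.inl u ∈ S, ∀ has : Sum.inr a ∈ S,
          (extendForest F ι par hpar).anc ⟨Sum.inl u, hus⟩ ⟨Sum.inr a, has⟩ := by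
        intro hus has
        have huW : u ∈ Wᶜ := (hmemV u).mp hus
        have hanc : ∀ x : ↥Wᶜ, par ⟨Sum.inr a, has⟩ = some x → F.anc ⟨u, huW⟩ x →
            (extendForest F ι par hpar).anc ⟨Sum.inl u, hus⟩ ⟨Sum.inr a, has⟩ := by
          intro x hpx hax
          exact extendForest_anc_gadget F ι par hpar (y := ⟨Sum.inr a, has⟩) hpx hax
        by_cases h1 : (att a).1 ∈ Wᶜ
        · by_cases h2 : (att a).2 ∈ Wᶜ
          · have hadjI : (G.induce Wᶜ).Adj ⟨(att a).1, h1⟩ ⟨(att a).2, h2⟩ := (hgadget a).1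
            have helim := hFelim _ _ hadjI
            by_cases h : F.anc ⟨(att a).1, h1⟩ ⟨(att a).2, h2⟩
            · have hpx : par ⟨Sum.inr a, has⟩ = some ⟨(att a).2, h2⟩ := by
                show (if h1 : _ then _ else _) = _
                rw [dif_pos h1, dif_pos h2, if_pos h]
              rcases hu with he | he
              · refine hanc _ hpx ?_
                have : (⟨(att a).1, h1⟩ : ↥Wᶜ) = ⟨u, huW⟩ := Subtype.ext he
                exact this ▸ h
              · refine hanc _ hpx ?_
                have : (⟨(att a).2, h2⟩ : ↥Wᶜ) = ⟨u, huW⟩ := Subtype.ext he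
                exact this ▸ Relation.ReflTransGen.refl
            · have h' : F.anc ⟨(att a).2, h2⟩ ⟨(att a).1, h1⟩ := helim.resolve_left h
              have hpx : par ⟨Sum.inr a, has⟩ = some ⟨(att a).1, h1⟩ := by
                show (if h1 : _ then _ else _) = _
                rw [dif_pos h1, dif_pos h2, if_neg h]
              rcases hu with he | he
              · refine hanc _ hpx ?_
                have : (⟨(att a).1, h1⟩ : ↥Wᶜ) = ⟨u, huW⟩ := Subtype.ext he
                exact this ▸ Relation.ReflTransGen.refl
              · refine hanc _ hpx ?_
                have : (⟨(att a).2, h2⟩ : ↥Wᶜ) = ⟨u, huW⟩ := Subtype.ext he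
                exact this ▸ h'
          · have hu1 : (att a).1 = u := by
              rcases hu with he | he
              · exact he
              · exact absurd (he ▸ huW) h2
            have hpx : par ⟨Sum.inr a, has⟩ = some ⟨(att a).1, h1⟩ := by
              show (if h1 : _ then _ else _) = _
              rw [dif_pos h1, dif_neg h2]
            refine hanc _ hpx ?_
            have : (⟨(att a).1, h1⟩ : ↥Wᶜ) = ⟨u, huW⟩ := Subtype.ext hu1
            exact this ▸ Relation.ReflTransGen.refl
        · have hu2 : (att a).2 = u := by
            rcases hu with he | he
            · exact absurd (he ▸ huW) h1
            · exact he
          have h2 : (att a).2 ∈ Wᶜ := hu2 ▸ huW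
          have hpx : par ⟨Sum.inr a, has⟩ = some ⟨(att a).2, h2⟩ := by
            show (if h1 : _ then _ else _) = _
            rw [dif_neg h1, dif_pos h2]
          refine hanc _ hpx ?_
          have : (⟨(att a).2, h2⟩ : ↥Wᶜ) = ⟨u, huW⟩ := Subtype.ext hu2
          exact this ▸ Relation.ReflTransGen.refl
      rcases hc with ⟨hxe, hye⟩ | ⟨hxe, hye⟩
      · subst hxe; subst hye
        exact Or.inl (key hx hy)
      · subst hxe; subst hye
        exact Or.inr (key hy hx)
    · have := extendForest_forestDepth F ι par hpar hιinj
      omega
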